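/- Let n ≥ 2 be even, l < 2^n with l ≠ 0, and set w = wt(l). Let C = {i < 2^n : wt(i) ∈ {n/2 − 1, n/2}} and R = {i < 2^n : wt(i) ∈ {n/2 − 2, n/2 − 1, n/2, n/2 + 1}}. Then the cardinality of C ∩ (l ⊕ (R \ C)) equals C(w, ⌈(w+1)/2⌉) · C(n − w + 1, n/2 − ⌈w/2⌉), where C(·,·) denotes the binomial coefficient (with the convention C(p,q) = 0 if q < 0 or q > p). -/

import Mathlib

/-!
Identify `n`-bit numbers with subsets of `{0, …, n-1}` through their bit indices: the Hamming
weight becomes cardinality and `^^^` becomes symmetric difference. With `m = n / 2` and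
`L` the set of `l` (of size `w`), `R \ C` consists of the sets `S` of size `m - 2` or `m + 1`,
and `#(L ∆ S) = w + #S - 2 #(S ∩ L)`. For `#S = m + 1` this lies in `{m - 1, m}` iff
`#(S ∩ L) = k := ⌈(w + 1) / 2⌉`; for `#S = m - 2` it does iff the complement of `S`, of size
`m + 2`, meets `L` in `k` points. Hence the count is
`C(w, k) (C(n - w, m + 1 - k) + C(n - w, m + 2 - k))`, which Pascal's rule and the symmetry
of binomial coefficients turn into the stated product.
-/

/-- Hamming weight of a natural number. -/
def wt (n : ℕ) : ℕ := (Nat.digits 2 n).sum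

open Finset
open scoped symmDiff

theorem wt_eq_mod_two_add_wt_div_two (n : ℕ) : wt n = n % 2 + wt (n / 2) := by
  rcases n.eq_zero_or_pos with rfl | hn
  · rfl
  · rw [wt, Nat.digits_def' one_lt_two hn, List.sum_cons, wt]

theorem wt_eq_card_equivBitIndices (n : ℕ) : wt n = #(equivBitIndices n) := by
  rw [equivBitIndices_apply, List.toFinset_card_of_nodup Nat.bitIndices_nodup]
  induction n using Nat.binaryRec with
  | zero => rfl
  | bit b n ih =>
    rw [wt_eq_mod_two_add_wt_div_two]
    cases b
    · simp [ih]
    · simp [ih, Nat.mul_add_div]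
      omega

theorem equivBitIndices_xor (x y : ℕ) :
    equivBitIndices (x ^^^ y) = equivBitIndices x ∆ equivBitIndices y := by
  ext i
  simp only [equivBitIndices_apply, List.mem_toFinset, Nat.mem_bitIndices, Nat.testBit_xor,
    mem_symmDiff]
  cases x.testBit i <;> cases y.testBit i <;> decide

theorem equivBitIndices_subset_range_iff {n k : ℕ} : equivBitIndices n ⊆ range k ↔ n < 2 ^ k := by
  simp only [subset_iff, equivBitIndices_apply, List.mem_toFinset, Nat.mem_bitIndices, mem_range]
  constructor
  · intro h
    exact Nat.lt_pow_two_of_testBit n fun i hi => by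
      by_contra hbit
      exact absurd (h (by simpa using hbit)) (by omega)
  · intro h i hi
    by_contra hik
    have := Nat.testBit_lt_two_pow (h.trans_le (Nat.pow_le_pow_right two_pos (not_lt.1 hik)))
    simp_all

theorem card_filter_range_two_pow (k : ℕ) (p : Finset ℕ → Prop) [DecidablePred p] :
    #{c ∈ range (2 ^ k) | p (equivBitIndices c)} = #{S ∈ (range k).powerset | p S} :=
  card_equiv equivBitIndices fun c => by
    simp only [mem_filter, mem_range, mem_powerset, equivBitIndices_subset_range_iff]

section
variable {α : Type*} [DecidableEq α]

theorem card_symmDiff_add_two_mul_card_inter (s t : Finset α) :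
    #(s ∆ t) + 2 * #(s ∩ t) = #s + #t := by
  rw [symmDiff_eq_sup_sdiff_inf, sup_eq_union, inf_eq_inter,
    card_sdiff_of_subset (inter_subset_left.trans subset_union_left)]
  have := card_union_add_card_inter s t
  have := card_le_card (inter_subset_left.trans subset_union_left : s ∩ t ⊆ s ∪ t)
  omega

theorem card_filter_powerset_sdiff (U : Finset α) (p : Finset α → Prop) [DecidablePred p] :
    #{S ∈ U.powerset | p (U \ S)} = #{S ∈ U.powerset | p S} := by
  refine card_nbij' (U \ ·) (U \ ·) ?_ ?_ ?_ ?_ <;>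
    intro S hS <;> simp_all

theorem card_filter_powerset_card_inter {U L : Finset α} (hL : L ⊆ U) (k j : ℕ) :
    #{S ∈ U.powerset | #S = k + j ∧ #(S ∩ L) = k} = (#L).choose k * (#U - #L).choose j := by
  rw [← card_sdiff_of_subset hL, ← card_powersetCard, ← card_powersetCard, ← card_product]
  have split {A B : Finset α} (hA : A ⊆ L) (hB : B ⊆ U \ L) :
      (A ∪ B) ∩ L = A ∧ (A ∪ B) \ L = B := by
    have hBL := (subset_sdiff.1 hB).2
    constructor
    · rw [union_inter_distrib_right, inter_eq_left.2 hA, disjoint_iff_inter_eq_empty.1 hBL,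
        union_empty]
    · rw [union_sdiff_distrib, sdiff_eq_empty_iff_subset.2 hA, sdiff_eq_self_of_disjoint hBL,
        empty_union]
  refine card_nbij' (fun S => (S ∩ L, S \ L)) (fun p => p.1 ∪ p.2) ?_ ?_ ?_ ?_
  · intro S hS
    simp only [mem_coe, mem_filter, mem_powerset, mem_product, mem_powersetCard] at hS ⊢
    have := card_inter_add_card_sdiff S L
    exact ⟨⟨inter_subset_right, hS.2.2⟩, sdiff_subset_sdiff hS.1 le_rfl, by omega⟩
  · intro p hp
    simp only [mem_coe, mem_filter, mem_powerset, mem_product, mem_powersetCard] at hp ⊢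
    obtain ⟨⟨hA, hAk⟩, hB, hBj⟩ := hp
    have hBL := (subset_sdiff.1 hB).2
    refine ⟨union_subset (hA.trans hL) (hB.trans sdiff_subset), ?_, by rw [(split hA hB).1, hAk]⟩
    rw [card_union_of_disjoint (hBL.symm.mono_left hA), hAk, hBj]
  · intro S _
    exact sup_inf_sdiff S L
  · intro p hp
    simp only [mem_coe, mem_product, mem_powersetCard] at hp
    exact Prod.ext_iff.2 (split hp.1.1 hp.2.1)

theorem card_outer_layers_symmDiff_mem_middle_layers {U L : Finset α} {m : ℕ} (hL : L ⊆ U)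
    (hU : #U = 2 * m) (hL₀ : L.Nonempty) :
    #{S ∈ U.powerset | (#S + 2 = m ∨ #S = m + 1) ∧ (#(L ∆ S) = m - 1 ∨ #(L ∆ S) = m)} =
      (#L).choose ((#L + 2) / 2) * (2 * m - #L + 1).choose (m - (#L + 1) / 2) := by
  set w := #L
  set k := (w + 2) / 2
  have hw : w ≤ 2 * m := hU ▸ card_le_card hL
  have hw₀ : 0 < w := hL₀.card_pos
  have profile : ∀ S ∈ U.powerset,
      ((#S + 2 = m ∨ #S = m + 1) ∧ (#(L ∆ S) = m - 1 ∨ #(L ∆ S) = m)) ↔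
        (#S = k + (m + 1 - k) ∧ #(S ∩ L) = k) ∨
          (#(U \ S) = k + (m + 2 - k) ∧ #((U \ S) ∩ L) = k) := by
    intro S hS
    have hSU := mem_powerset.1 hS
    have hdist := card_symmDiff_add_two_mul_card_inter L S
    have hcompl : #(U \ S) = #U - #S := card_sdiff_of_subset hSU
    have hcompl_inter : #((U \ S) ∩ L) = w - #(S ∩ L) := by
      rw [sdiff_inter_right_comm, inter_eq_right.2 hL, card_sdiff, inter_comm]
    have := card_le_card hSU
    have := card_le_card (inter_subset_left : S ∩ L ⊆ S)
    have := card_le_card (inter_subset_right : S ∩ L ⊆ L)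
    rw [inter_comm] at hdist
    omega
  rw [filter_congr profile, filter_or, card_union_of_disjoint, card_filter_powerset_sdiff
    (p := fun T => #T = k + (m + 2 - k) ∧ #(T ∩ L) = k), card_filter_powerset_card_inter hL,
    card_filter_powerset_card_inter hL, ← mul_add, hU, show m + 2 - k = m + 1 - k + 1 by omega,
    ← Nat.choose_succ_succ', ← Nat.sub_add_comm hw]
  · congr 1
    exact Nat.choose_symm_of_eq_add (by omega)
  · refine disjoint_filter.2 fun S hS h₁ h₂ => ?_
    have := card_sdiff_of_subset (mem_powerset.1 hS)
    omega

end

theorem stmt17_general (n : ℕ) (heven : Even n) (l : ℕ) (hl : l < 2 ^ n)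
    (hl0 : l ≠ 0) :
    (((Finset.range (2 ^ n)).filter (fun i => wt i = n / 2 - 1 ∨ wt i = n / 2)) ∩
        (((Finset.range (2 ^ n)).filter (fun i =>
              wt i = n / 2 - 2 ∨ wt i = n / 2 - 1 ∨ wt i = n / 2 ∨ wt i = n / 2 + 1) \
            (Finset.range (2 ^ n)).filter (fun i =>
              wt i = n / 2 - 1 ∨ wt i = n / 2)).image (fun c => l ^^^ c))).card =
      Nat.choose (wt l) ((wt l + 2) / 2) *
        Nat.choose (n - wt l + 1) (n / 2 - (wt l + 1) / 2) := by
  obtain ⟨m, rfl⟩ := heven.two_dvd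
  rw [Nat.mul_div_cancel_left m two_pos, inter_comm, ← filter_mem_eq_inter, filter_image,
    card_image_of_injective _ Nat.xor_right_injective]
  have hL₀ : (equivBitIndices l).Nonempty :=
    nonempty_iff_ne_empty.2 (by simpa using equivBitIndices.injective.ne hl0)
  -- `wt c + 2 = m` rather than `wt c = m - 2`: for `m = 1` the truncated `m - 2` would put
  -- weight `0` into `R \ C`, although it lies in `C`.
  calc _ = #{c ∈ range (2 ^ (2 * m)) | (wt c + 2 = m ∨ wt c = m + 1) ∧
              (wt (l ^^^ c) = m - 1 ∨ wt (l ^^^ c) = m)} := by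
        congr 1
        ext c
        simp only [mem_filter, mem_sdiff, mem_range]
        constructor
        · omega
        · intro h
          have := Nat.xor_lt_two_pow hl h.1
          omega
    _ = #{S ∈ (range (2 * m)).powerset | (#S + 2 = m ∨ #S = m + 1) ∧
          (#(equivBitIndices l ∆ S) = m - 1 ∨ #(equivBitIndices l ∆ S) = m)} := by
        simp only [wt_eq_card_equivBitIndices, equivBitIndices_xor]
        exact card_filter_range_two_pow (2 * m) fun S => (#S + 2 = m ∨ #S = m + 1) ∧
          (#(equivBitIndices l ∆ S) = m - 1 ∨ #(equivBitIndices l ∆ S) = m)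
    _ = _ := by
        rw [card_outer_layers_symmDiff_mem_middle_layers (equivBitIndices_subset_range_iff.2 hl)
          (card_range _) hL₀, wt_eq_card_equivBitIndices]

theorem stmt17 (n : ℕ) (hn : 2 ≤ n) (heven : Even n) (l : ℕ) (hl : l < 2 ^ n)
    (hl0 : l ≠ 0) :
    (((Finset.range (2 ^ n)).filter (fun i => wt i = n / 2 - 1 ∨ wt i = n / 2)) ∩
        (((Finset.range (2 ^ n)).filter (fun i =>
              wt i = n / 2 - 2 ∨ wt i = n / 2 - 1 ∨ wt i = n / 2 ∨ wt i = n / 2 + 1) \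
            (Finset.range (2 ^ n)).filter (fun i =>
              wt i = n / 2 - 1 ∨ wt i = n / 2)).image (fun c => l ^^^ c))).card =
      Nat.choose (wt l) ((wt l + 2) / 2) *
        Nat.choose (n - wt l + 1) (n / 2 - (wt l + 1) / 2) :=
  stmt17_general n heven l hl hl0
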